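/- arXiv:1509.05461 — 10 statements merged into one kernel-verified Lean document; each statement's English description precedes it below -/
import Mathlib

section
/- Let Q be a magma with two-sided inverses, i.e., a set with a binary operation ·, an element 1, and a map x ↦ x⁻¹ satisfying 1·x = x·1 = x and x·x⁻¹ = x⁻¹·x = 1 for all x ∈ Q. If Q satisfies the left Bol identity (x·(y·x))·z = x·(y·(x·z)) for all x, y, z, then Q is a loop: for all a, b ∈ Q there is a unique x with a·x = b and a unique y with y·a = b. -/
/-!
Specialising the left Bol identity at `x = a` or `x = a⁻¹` and at `y = 1`, `y = a⁻¹` or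
`y = a⁻¹ * a⁻¹` yields the left inverse property `a * (a⁻¹ * b) = b = a⁻¹ * (a * b)`, so every
left translation is a bijection. The instance `x = a, z = a⁻¹` reads `(a * (y * a)) * a⁻¹ = a * y`,
which makes right translation by `a` injective, and `a⁻¹ * ((a * b) * a⁻¹)` solves `y * a = b`.
-/

namespace LeftBol

variable {Q : Type*} [MulOneClass Q] [Inv Q]

theorem inv_mul_inv_mul_self (inv_mul : ∀ x : Q, x⁻¹ * x = 1)
    (bol : ∀ x y z : Q, x * (y * x) * z = x * (y * (x * z))) (a : Q) :
    a⁻¹ * a⁻¹ * a = a⁻¹ := by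
  simpa only [one_mul, inv_mul, mul_one] using bol a⁻¹ 1 a

theorem mul_right_surjective (inv_mul : ∀ x : Q, x⁻¹ * x = 1) (mul_inv : ∀ x : Q, x * x⁻¹ = 1)
    (bol : ∀ x y z : Q, x * (y * x) * z = x * (y * (x * z))) (a : Q) :
    Function.Surjective (a * ·) := fun b =>
  ⟨a⁻¹ * a⁻¹ * (a * b), by
    simpa only [inv_mul_inv_mul_self inv_mul bol, mul_inv, one_mul] using
      (bol a (a⁻¹ * a⁻¹) b).symm⟩

theorem mul_inv_cancel_left (inv_mul : ∀ x : Q, x⁻¹ * x = 1) (mul_inv : ∀ x : Q, x * x⁻¹ = 1)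
    (bol : ∀ x y z : Q, x * (y * x) * z = x * (y * (x * z))) (a b : Q) :
    a * (a⁻¹ * b) = b := by
  obtain ⟨c, rfl⟩ := mul_right_surjective inv_mul mul_inv bol a b
  simpa only [inv_mul, mul_one] using (bol a a⁻¹ c).symm

theorem mul_right_bijective (inv_mul : ∀ x : Q, x⁻¹ * x = 1) (mul_inv : ∀ x : Q, x * x⁻¹ = 1)
    (bol : ∀ x y z : Q, x * (y * x) * z = x * (y * (x * z))) (a : Q) :
    Function.Bijective (a * ·) := by
  have right_inv : Function.RightInverse (a⁻¹ * ·) (a * ·) :=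
    mul_inv_cancel_left inv_mul mul_inv bol a
  have inv_surjective : Function.Surjective (a⁻¹ * ·) :=
    mul_right_surjective inv_mul mul_inv bol a⁻¹
  refine ⟨fun u v huv => ?_, right_inv.surjective⟩
  obtain ⟨s, rfl⟩ := inv_surjective u
  obtain ⟨t, rfl⟩ := inv_surjective v
  rw [← right_inv s, ← right_inv t, huv]

theorem mul_left_injective (mul_inv : ∀ x : Q, x * x⁻¹ = 1)
    (bol : ∀ x y z : Q, x * (y * x) * z = x * (y * (x * z))) {a : Q}
    (hinj : Function.Injective (a * ·)) : Function.Injective (· * a) := fun u v huv => by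
  have key : ∀ y, a * (y * a) * a⁻¹ = a * y := fun y => by
    simpa only [mul_inv, mul_one] using bol a y a⁻¹
  exact hinj (by simpa only [key] using congrArg (fun w => a * w * a⁻¹) huv)

theorem mul_left_bijective (inv_mul : ∀ x : Q, x⁻¹ * x = 1) (mul_inv : ∀ x : Q, x * x⁻¹ = 1)
    (bol : ∀ x y z : Q, x * (y * x) * z = x * (y * (x * z))) (a : Q) :
    Function.Bijective (· * a) := by
  refine ⟨mul_left_injective mul_inv bol (mul_right_bijective inv_mul mul_inv bol a).1,
    fun b => ⟨a⁻¹ * (a * b * a⁻¹), ?_⟩⟩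
  have inv_mul_cancel_left : a⁻¹ * (a * b) = b :=
    (mul_right_bijective inv_mul mul_inv bol a).1 (mul_inv_cancel_left inv_mul mul_inv bol a _)
  simpa only [inv_mul, mul_one, inv_mul_cancel_left] using bol a⁻¹ (a * b) a

end LeftBol

/-- A magma with two-sided inverses satisfying the left Bol
identity is a loop. -/
theorem stmt_4 {Q : Type*} (mul : Q → Q → Q) (one : Q) (inv : Q → Q)
    (h_one_left : ∀ x, mul one x = x) (h_one_right : ∀ x, mul x one = x)
    (h_inv_right : ∀ x, mul x (inv x) = one)
    (h_inv_left : ∀ x, mul (inv x) x = one)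
    (h_lb : ∀ x y z, mul (mul x (mul y x)) z = mul x (mul y (mul x z))) :
    ∀ a b : Q, (∃! x : Q, mul a x = b) ∧ (∃! y : Q, mul y a = b) := by
  let _ : MulOneClass Q :=
    { mul, one, one_mul := h_one_left, mul_one := h_one_right }
  let _ : Inv Q := ⟨inv⟩
  intro a b
  exact ⟨(LeftBol.mul_right_bijective h_inv_left h_inv_right h_lb a).existsUnique b,
    (LeftBol.mul_left_bijective h_inv_left h_inv_right h_lb a).existsUnique b⟩
end

section
/- Let Q be a magma with two-sided inverses, i.e., a set with a binary operation ·, an element 1, and a map x ↦ x⁻¹ satisfying 1·x = x·1 = x and x·x⁻¹ = x⁻¹·x = 1 for all x ∈ Q. If Q satisfies the Moufang identity ((x·y)·x)·z = x·(y·(x·z)) for all x, y, z, then Q is a loop: for all a, b ∈ Q there is a unique x with a·x = b and a unique y with y·a = b. -/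
/-!
Setting `z = 1` in the Moufang identity gives flexibility `(x * y) * x = x * (y * x)`, so the
identity reads `L_{x (y x)} = L_x ∘ L_y ∘ L_x` for the left multiplications `L_x`. Since
`a * (a * (a * a)⁻¹) = 1` and one-sided inverses are two-sided here, `a * ((a * a)⁻¹ * a) = 1`,
hence `L_a ∘ L_{(a a)⁻¹} ∘ L_a = id` and `L_a` is bijective. Cancelling `L_a` in
`L_a ∘ L_{a⁻¹} ∘ L_a = L_{(a a⁻¹) a} = L_a` shows that `L_{a⁻¹}` inverts `L_a`; the inverse
property on the right follows from the one on the left by flexibility.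
-/

section MoufangInverses

variable {Q : Type*} [MulOneClass Q]

theorem flexible_of_moufang (moufang : ∀ x y z : Q, x * y * x * z = x * (y * (x * z)))
    (x y : Q) : x * y * x = x * (y * x) := by
  simpa using moufang x y 1

theorem mul_mul_mul_self_mul_of_moufang
    (moufang : ∀ x y z : Q, x * y * x * z = x * (y * (x * z))) (x y z : Q) :
    x * (y * x) * z = x * (y * (x * z)) := by
  rw [← flexible_of_moufang moufang, moufang]

variable [Inv Q]

theorem mul_eq_one_comm_of_moufang (moufang : ∀ x y z : Q, x * y * x * z = x * (y * (x * z)))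
    (h_mul_inv : ∀ x : Q, x * x⁻¹ = 1) {a c : Q} (h : a * c = 1) : c * a = 1 := by
  have := mul_mul_mul_self_mul_of_moufang moufang c a c⁻¹
  rw [h, mul_one, h_mul_inv, mul_one] at this
  exact this.symm

theorem mul_mul_self_inv_mul_of_moufang
    (moufang : ∀ x y z : Q, x * y * x * z = x * (y * (x * z)))
    (h_mul_inv : ∀ x : Q, x * x⁻¹ = 1) (a : Q) : a * ((a * a)⁻¹ * a) = 1 := by
  have h : a * (a * (a * a)⁻¹) = 1 := by
    simpa [h_mul_inv] using (moufang a 1 (a * a)⁻¹).symm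
  rw [← flexible_of_moufang moufang]
  exact mul_eq_one_comm_of_moufang moufang h_mul_inv h

theorem bijective_mul_left_of_moufang
    (moufang : ∀ x y z : Q, x * y * x * z = x * (y * (x * z)))
    (h_mul_inv : ∀ x : Q, x * x⁻¹ = 1) (a : Q) : Function.Bijective (a * ·) := by
  have sandwich (y : Q) : a * ((a * a)⁻¹ * (a * y)) = y := by
    rw [← mul_mul_mul_self_mul_of_moufang moufang,
      mul_mul_self_inv_mul_of_moufang moufang h_mul_inv, one_mul]
  exact ⟨fun y y' h => by rw [← sandwich y, ← sandwich y', show a * y = a * y' from h],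
    fun y => ⟨_, sandwich y⟩⟩

theorem inv_mul_cancel_left_of_moufang
    (moufang : ∀ x y z : Q, x * y * x * z = x * (y * (x * z)))
    (h_mul_inv : ∀ x : Q, x * x⁻¹ = 1) (a y : Q) : a⁻¹ * (a * y) = y := by
  apply (bijective_mul_left_of_moufang moufang h_mul_inv a).injective
  simpa [h_mul_inv] using (moufang a a⁻¹ y).symm

theorem mul_inv_cancel_left_of_moufang
    (moufang : ∀ x y z : Q, x * y * x * z = x * (y * (x * z)))
    (h_mul_inv : ∀ x : Q, x * x⁻¹ = 1) (a y : Q) : a * (a⁻¹ * y) = y := by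
  obtain ⟨w, rfl⟩ := (bijective_mul_left_of_moufang moufang h_mul_inv a).surjective y
  rw [inv_mul_cancel_left_of_moufang moufang h_mul_inv]

theorem inv_inv_of_moufang (moufang : ∀ x y z : Q, x * y * x * z = x * (y * (x * z)))
    (h_mul_inv : ∀ x : Q, x * x⁻¹ = 1) (a : Q) : a⁻¹⁻¹ = a := by
  simpa [h_mul_inv] using (mul_inv_cancel_left_of_moufang moufang h_mul_inv a a⁻¹⁻¹).symm

theorem mul_inv_cancel_right_of_moufang
    (moufang : ∀ x y z : Q, x * y * x * z = x * (y * (x * z)))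
    (h_mul_inv : ∀ x : Q, x * x⁻¹ = 1) (h_inv_mul : ∀ x : Q, x⁻¹ * x = 1) (a y : Q) :
    y * a⁻¹ * a = y := by
  have h := mul_mul_mul_self_mul_of_moufang moufang a⁻¹ y a
  rw [h_inv_mul, mul_one] at h
  calc y * a⁻¹ * a = a * (a⁻¹ * (y * a⁻¹) * a) := by
        rw [← flexible_of_moufang moufang, mul_inv_cancel_left_of_moufang moufang h_mul_inv]
    _ = y := by rw [h, mul_inv_cancel_left_of_moufang moufang h_mul_inv]

theorem bijective_mul_right_of_moufang
    (moufang : ∀ x y z : Q, x * y * x * z = x * (y * (x * z)))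
    (h_mul_inv : ∀ x : Q, x * x⁻¹ = 1) (h_inv_mul : ∀ x : Q, x⁻¹ * x = 1) (a : Q) :
    Function.Bijective (· * a) := by
  refine Function.bijective_iff_has_inverse.mpr ⟨(· * a⁻¹), fun y => ?_, fun y => ?_⟩
  · simpa [inv_inv_of_moufang moufang h_mul_inv] using
      mul_inv_cancel_right_of_moufang moufang h_mul_inv h_inv_mul a⁻¹ y
  · exact mul_inv_cancel_right_of_moufang moufang h_mul_inv h_inv_mul a y

end MoufangInverses

/-- A magma with two-sided inverses satisfying the Moufang
identity (M1) is a loop. -/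
theorem stmt_5 {Q : Type*} (mul : Q → Q → Q) (one : Q) (inv : Q → Q)
    (h_one_left : ∀ x, mul one x = x) (h_one_right : ∀ x, mul x one = x)
    (h_inv_right : ∀ x, mul x (inv x) = one)
    (h_inv_left : ∀ x, mul (inv x) x = one)
    (h_m1 : ∀ x y z, mul (mul (mul x y) x) z = mul x (mul y (mul x z))) :
    ∀ a b : Q, (∃! x : Q, mul a x = b) ∧ (∃! y : Q, mul y a = b) := by
  let : MulOneClass Q :=
    { mul := mul, one := one, one_mul := h_one_left, mul_one := h_one_right }
  let : Inv Q := ⟨inv⟩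
  intro a b
  exact ⟨(Function.bijective_iff_existsUnique _).mp
      (bijective_mul_left_of_moufang h_m1 h_inv_right a) b,
    (Function.bijective_iff_existsUnique _).mp
      (bijective_mul_right_of_moufang h_m1 h_inv_right h_inv_left a) b⟩
end

section
/- Let Q be a magma with two-sided inverses, i.e., a set with a binary operation ·, an element 1, and a map x ↦ x⁻¹ satisfying 1·x = x·1 = x and x·x⁻¹ = x⁻¹·x = 1 for all x ∈ Q. If Q satisfies the Moufang identity x·(y·(z·y)) = ((x·y)·z)·y for all x, y, z, then Q is a loop: for all a, b ∈ Q there is a unique x with a·x = b and a unique y with y·a = b. -/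
/-!
Putting `x = 1` in (M2) gives flexibility `y(zy) = (yz)y`. If `y y' = y' y = 1`, then (M2) with
`z = y'` yields `xy = ((xy)y')y`, and two further instances of (M2) show `(((xy)y')y')y = x`;
applying the latter to `(xy)y'` in place of `x` gives the right inverse property `(xy)y' = x`,
and one more instance of (M2) gives the left inverse property `y'(yx) = x`. The inverse
properties make left and right multiplication by `a` bijective.
-/

def IsMoufangM2 (M : Type*) [Mul M] : Prop :=
  ∀ x y z : M, x * (y * (z * y)) = x * y * z * y

namespace IsMoufangM2

variable {M : Type*} [MulOneClass M]

theorem flexible (hM : IsMoufangM2 M) (y z : M) : y * (z * y) = y * z * y := by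
  simpa only [one_mul] using hM 1 y z

theorem mul_mul_mul_mul_cancel (hM : IsMoufangM2 M) {y y' : M} (h : y * y' = 1)
    (h' : y' * y = 1) (x : M) : x * y * y' * y' * y = x := by
  have hyy'y' : y * (y' * y') = y' := by simpa only [one_mul, mul_one, h] using hM y y' 1
  have hxyy' : x * y * (y' * y') = x * y * y' * y' := by
    simpa only [one_mul, mul_one] using hM (x * y) y' 1
  calc x * y * y' * y' * y = x * y * (y' * y') * y := by rw [hxyy']
    _ = x * (y * (y' * y' * y)) := (hM x y (y' * y')).symm
    _ = x := by rw [hM.flexible, hyy'y', h', mul_one]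

theorem mul_mul_cancel_right (hM : IsMoufangM2 M) {y y' : M} (h : y * y' = 1)
    (h' : y' * y = 1) (x : M) : x * y * y' = x := by
  have hxy : x * y * y' * y = x * y := by simpa only [h', mul_one] using (hM x y y').symm
  calc x * y * y' = x * y * y' * y * y' * y' * y := (hM.mul_mul_mul_mul_cancel h h' _).symm
    _ = x := by rw [hxy, hM.mul_mul_mul_mul_cancel h h']

theorem mul_mul_cancel_left (hM : IsMoufangM2 M) {y y' : M} (h : y * y' = 1)
    (h' : y' * y = 1) (x : M) : y' * (y * x) = x := by
  simpa only [h', one_mul, hM.mul_mul_cancel_right h' h] using hM y' y (x * y')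

theorem existsUnique_mul_left_eq (hM : IsMoufangM2 M) {a a' : M} (h : a * a' = 1)
    (h' : a' * a = 1) (b : M) : ∃! x, a * x = b :=
  ⟨a' * b, hM.mul_mul_cancel_left h' h b, fun x hx => by
    rw [← hx, hM.mul_mul_cancel_left h h']⟩

theorem existsUnique_mul_right_eq (hM : IsMoufangM2 M) {a a' : M} (h : a * a' = 1)
    (h' : a' * a = 1) (b : M) : ∃! y, y * a = b :=
  ⟨b * a', hM.mul_mul_cancel_right h' h b, fun y hy => by
    rw [← hy, hM.mul_mul_cancel_right h h']⟩

end IsMoufangM2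

/-- A magma with two-sided inverses satisfying the Moufang
identity (M2) is a loop. -/
theorem stmt_6 {Q : Type*} (mul : Q → Q → Q) (one : Q) (inv : Q → Q)
    (h_one_left : ∀ x, mul one x = x) (h_one_right : ∀ x, mul x one = x)
    (h_inv_right : ∀ x, mul x (inv x) = one)
    (h_inv_left : ∀ x, mul (inv x) x = one)
    (h_m2 : ∀ x y z, mul x (mul y (mul z y)) = mul (mul (mul x y) z) y) :
    ∀ a b : Q, (∃! x : Q, mul a x = b) ∧ (∃! y : Q, mul y a = b) := by
  let _ : MulOneClass Q :=
    { mul := mul, one := one, one_mul := h_one_left, mul_one := h_one_right }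
  have hM : IsMoufangM2 Q := h_m2
  intro a b
  exact ⟨hM.existsUnique_mul_left_eq (h_inv_right a) (h_inv_left a) b,
    hM.existsUnique_mul_right_eq (h_inv_right a) (h_inv_left a) b⟩
end

section
/- Let Q be a magma with two-sided inverses, i.e., a set with a binary operation ·, an element 1, and a map x ↦ x⁻¹ satisfying 1·x = x·1 = x and x·x⁻¹ = x⁻¹·x = 1 for all x ∈ Q. If Q satisfies the C-identity x·(y·(y·z)) = ((x·y)·y)·z for all x, y, z, then Q is a loop: for all a, b ∈ Q there is a unique x with a·x = b and a unique y with y·a = b. -/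
/-!
Putting `x = 1` and `z = 1` in the C-identity gives `y(yz) = (yy)z` and `(xy)y = x(yy)`, so the
C-identity says that every square `yy` associates with everything on both sides. If `b` is a
two-sided inverse of `a`, then `aa` and `bb` are mutually inverse squares, so the left translation
by `aa`, which is the square of the left translation by `a`, is a bijection; hence so is the left
translation by `a`. Right translations are handled symmetrically.
-/

open Function

theorem Function.Bijective.of_comp_self {α : Type*} {f : α → α} (hf : Bijective (f ∘ f)) :
    Bijective f :=
  ⟨hf.injective.of_comp, hf.surjective.of_comp⟩

def CIdentity (M : Type*) [Mul M] : Prop :=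
  ∀ x y z : M, x * (y * (y * z)) = x * y * y * z

namespace CIdentity

variable {M : Type*} [MulOneClass M]

theorem mul_self_mul (hc : CIdentity M) (y z : M) : y * (y * z) = y * y * z := by
  simpa only [one_mul] using hc 1 y z

theorem mul_mul_self (hc : CIdentity M) (x y : M) : x * y * y = x * (y * y) := by
  simpa only [mul_one] using (hc x y 1).symm

theorem mul_mul_self_mul (hc : CIdentity M) (x y z : M) : x * (y * y * z) = x * (y * y) * z := by
  rw [← hc.mul_self_mul, ← hc.mul_mul_self]
  exact hc x y z

theorem mul_self_mul_mul_self_eq_one (hc : CIdentity M) {a b : M} (hab : a * b = 1) :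
    a * a * (b * b) = 1 := by
  rw [← hc.mul_mul_self, ← hc.mul_self_mul, hab, mul_one, hab]

theorem bijective_mul_left (hc : CIdentity M) {a b : M} (hab : a * b = 1) (hba : b * a = 1) :
    Bijective (a * ·) := by
  have hsq : Bijective (a * a * ·) := bijective_iff_has_inverse.mpr
    ⟨(b * b * ·),
      fun z => by
        dsimp only
        rw [hc.mul_mul_self_mul, hc.mul_self_mul_mul_self_eq_one hba, one_mul],
      fun z => by
        dsimp only
        rw [hc.mul_mul_self_mul, hc.mul_self_mul_mul_self_eq_one hab, one_mul]⟩
  refine Bijective.of_comp_self ?_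
  simpa only [comp_def, hc.mul_self_mul] using hsq

theorem bijective_mul_right (hc : CIdentity M) {a b : M} (hab : a * b = 1) (hba : b * a = 1) :
    Bijective (· * a) := by
  have hsq : Bijective (· * (a * a)) := bijective_iff_has_inverse.mpr
    ⟨(· * (b * b)),
      fun z => by
        dsimp only
        rw [← hc.mul_mul_self_mul, hc.mul_self_mul_mul_self_eq_one hab, mul_one],
      fun z => by
        dsimp only
        rw [← hc.mul_mul_self_mul, hc.mul_self_mul_mul_self_eq_one hba, mul_one]⟩
  refine Bijective.of_comp_self ?_
  simpa only [comp_def, hc.mul_mul_self] using hsq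

end CIdentity

/-- A magma with two-sided inverses satisfying the C-identity is
a loop. -/
theorem stmt_8 {Q : Type*} (mul : Q → Q → Q) (one : Q) (inv : Q → Q)
    (h_one_left : ∀ x, mul one x = x) (h_one_right : ∀ x, mul x one = x)
    (h_inv_right : ∀ x, mul x (inv x) = one)
    (h_inv_left : ∀ x, mul (inv x) x = one)
    (h_c : ∀ x y z, mul x (mul y (mul y z)) = mul (mul (mul x y) y) z) :
    ∀ a b : Q, (∃! x : Q, mul a x = b) ∧ (∃! y : Q, mul y a = b) := by
  let _ : MulOneClass Q :=
    { mul := mul, one := one, one_mul := h_one_left, mul_one := h_one_right }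
  have hc : CIdentity Q := h_c
  intro a b
  exact ⟨(hc.bijective_mul_left (h_inv_right a) (h_inv_left a)).existsUnique b,
    (hc.bijective_mul_right (h_inv_right a) (h_inv_left a)).existsUnique b⟩
end

section
/- Let Q be a magma with two-sided inverses (1·x = x·1 = x and x·x⁻¹ = x⁻¹·x = 1 for all x) satisfying the C-identity x·(y·(y·z)) = ((x·y)·y)·z for all x, y, z. Then x⁻¹·x⁻¹ = (x·x)⁻¹ for every x ∈ Q. -/
/-!
Putting `x = 1`, resp. `z = 1`, in the C-identity gives `y(yz) = (yy)z` and `x(yy) = (xy)y`;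
together with the C-identity itself they show that every square `yy` associates in the middle,
`b((yy)c) = (b(yy))c`. Hence `x⁻¹x⁻¹ · xx = x⁻¹(x⁻¹x) · x = 1`, and
`x⁻¹x⁻¹ = x⁻¹x⁻¹ · (xx · (xx)⁻¹) = (x⁻¹x⁻¹ · xx) · (xx)⁻¹ = (xx)⁻¹`.
-/

namespace CMagma

variable {Q : Type*} {mul : Q → Q → Q} {one : Q}

theorem mul_mul_eq_mul_self_mul (h_one_left : ∀ x, mul one x = x)
    (h_c : ∀ x y z, mul x (mul y (mul y z)) = mul (mul (mul x y) y) z) (y z : Q) :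
    mul y (mul y z) = mul (mul y y) z := by
  simpa only [h_one_left] using h_c one y z

theorem mul_mul_self_eq_mul_mul (h_one_right : ∀ x, mul x one = x)
    (h_c : ∀ x y z, mul x (mul y (mul y z)) = mul (mul (mul x y) y) z) (x y : Q) :
    mul x (mul y y) = mul (mul x y) y := by
  simpa only [h_one_right] using h_c x y one

theorem mul_mul_self_mul_eq (h_one_left : ∀ x, mul one x = x) (h_one_right : ∀ x, mul x one = x)
    (h_c : ∀ x y z, mul x (mul y (mul y z)) = mul (mul (mul x y) y) z) (b y c : Q) :
    mul b (mul (mul y y) c) = mul (mul b (mul y y)) c := by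
  rw [← mul_mul_eq_mul_self_mul h_one_left h_c, h_c,
    mul_mul_self_eq_mul_mul h_one_right h_c]

end CMagma

open CMagma in
/-- In a magma with two-sided inverses satisfying the C-identity,
`x⁻¹·x⁻¹ = (x·x)⁻¹` for every `x`. -/
theorem stmt_10 {Q : Type*} (mul : Q → Q → Q) (one : Q) (inv : Q → Q)
    (h_one_left : ∀ x, mul one x = x) (h_one_right : ∀ x, mul x one = x)
    (h_inv_right : ∀ x, mul x (inv x) = one)
    (h_inv_left : ∀ x, mul (inv x) x = one)
    (h_c : ∀ x y z, mul x (mul y (mul y z)) = mul (mul (mul x y) y) z) :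
    ∀ x : Q, mul (inv x) (inv x) = inv (mul x x) := by
  intro x
  have h_left_inv : mul (mul (inv x) (inv x)) (mul x x) = one := by
    rw [mul_mul_self_eq_mul_mul h_one_right h_c, ← mul_mul_eq_mul_self_mul h_one_left h_c,
      h_inv_left, h_one_right, h_inv_left]
  calc mul (inv x) (inv x)
      = mul (mul (inv x) (inv x)) (mul (mul x x) (inv (mul x x))) := by
        rw [h_inv_right, h_one_right]
    _ = mul (mul (mul (inv x) (inv x)) (mul x x)) (inv (mul x x)) :=
        mul_mul_self_mul_eq h_one_left h_one_right h_c _ _ _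
    _ = inv (mul x x) := by rw [h_left_inv, h_one_left]
end

section
/- Let Q be a set with a binary operation ·, an element 1, and a map x ↦ x' such that 1·x = x (1 is a left neutral element) and x'·x = 1 (left inverses) for all x ∈ Q. If Q satisfies the left Bol identity (x·(y·x))·z = x·(y·(x·z)) for all x, y, z, then Q is a loop: 1 is a two-sided neutral element, every x' is a two-sided inverse of x, and for all a, b the equations a·x = b and y·a = b have unique solutions. -/
/-!
Write `L x` for left multiplication by `x`. The Bol identity says
`L (x * (y * x)) = L x ∘ L y ∘ L x`; taking `x = 1` gives `L (y * 1) = L y`, and taking `y = 1`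
gives `L (x * x) = L x ∘ L x`. For `A = L x⁻¹⁻¹` and `B = L x⁻¹`, the Bol identity at
`x⁻¹⁻¹ * 1` yields `A ∘ B ∘ A = A` and `A ∘ B ∘ B ∘ A = id`. The second makes `A` surjective, so
the first gives `A ∘ B = id`, and then `B ∘ A = (A ∘ B) ∘ (B ∘ A) = id`. Evaluating at `1` yields
`x⁻¹⁻¹ = x`, so every `L x` is a bijection with inverse `L x⁻¹`, and `1` and `x⁻¹` are
two-sided. Right multiplication by `a` is then inverted by `b ↦ a⁻¹ * (a * b * a⁻¹)`.
-/

structure IsLeftBol (Q : Type*) [Mul Q] [One Q] [Inv Q] : Prop where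
  one_mul : ∀ x : Q, 1 * x = x
  inv_mul : ∀ x : Q, x⁻¹ * x = 1
  bol : ∀ x y z : Q, x * (y * x) * z = x * (y * (x * z))

namespace IsLeftBol

variable {Q : Type*} [Mul Q] [One Q] [Inv Q]

theorem mul_one_mul (h : IsLeftBol Q) (x z : Q) : x * 1 * z = x * z := by
  simpa only [h.one_mul] using h.bol 1 x z

theorem mul_self_mul (h : IsLeftBol Q) (x z : Q) : x * x * z = x * (x * z) := by
  simpa only [h.one_mul] using h.bol x 1 z

theorem inv_mul_inv_inv_mul_one (h : IsLeftBol Q) (x : Q) : x⁻¹ * (x⁻¹⁻¹ * 1) = 1 := by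
  have := h.bol x⁻¹ x⁻¹⁻¹ x
  rwa [h.inv_mul, h.inv_mul, h.mul_one_mul, h.inv_mul, eq_comm] at this

theorem inv_inv_mul_inv_mul_inv_inv_mul (h : IsLeftBol Q) (x z : Q) :
    x⁻¹⁻¹ * (x⁻¹ * (x⁻¹⁻¹ * z)) = x⁻¹⁻¹ * z := by
  have := h.bol (x⁻¹⁻¹ * 1) x⁻¹ z
  rwa [h.inv_mul_inv_inv_mul_one, h.mul_one_mul, h.mul_one_mul, h.mul_one_mul, eq_comm] at this

theorem inv_inv_mul_inv_mul_one (h : IsLeftBol Q) (x : Q) : x⁻¹⁻¹ * (x⁻¹ * 1) = 1 := by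
  simpa only [h.inv_mul] using h.inv_inv_mul_inv_mul_inv_inv_mul x x⁻¹

theorem inv_inv_mul_inv_mul_inv_mul_inv_inv_mul (h : IsLeftBol Q) (x z : Q) :
    x⁻¹⁻¹ * (x⁻¹ * (x⁻¹ * (x⁻¹⁻¹ * z))) = z := by
  have := h.bol (x⁻¹⁻¹ * 1) (x⁻¹ * x⁻¹) z
  rwa [h.mul_self_mul, h.mul_self_mul, h.inv_mul_inv_inv_mul_one, h.mul_one_mul,
    h.inv_inv_mul_inv_mul_one, h.one_mul, h.mul_one_mul, h.mul_one_mul, eq_comm] at this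

theorem inv_inv_mul_inv_mul (h : IsLeftBol Q) (x z : Q) : x⁻¹⁻¹ * (x⁻¹ * z) = z := by
  have := h.inv_inv_mul_inv_mul_inv_inv_mul x (x⁻¹ * (x⁻¹ * (x⁻¹⁻¹ * z)))
  rwa [h.inv_inv_mul_inv_mul_inv_mul_inv_inv_mul] at this

theorem inv_mul_inv_inv_mul (h : IsLeftBol Q) (x z : Q) : x⁻¹ * (x⁻¹⁻¹ * z) = z := by
  rw [← h.inv_inv_mul_inv_mul x (x⁻¹ * (x⁻¹⁻¹ * z)),
    h.inv_inv_mul_inv_mul_inv_mul_inv_inv_mul]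

theorem inv_mul_one (h : IsLeftBol Q) (x : Q) : x⁻¹ * 1 = x⁻¹ := by
  simpa only [h.inv_mul] using h.inv_mul_inv_inv_mul x x⁻¹

theorem inv_inv (h : IsLeftBol Q) (x : Q) : x⁻¹⁻¹ = x := by
  simpa only [h.inv_mul, h.inv_mul_one] using h.inv_inv_mul_inv_mul x x

theorem mul_one (h : IsLeftBol Q) (x : Q) : x * 1 = x := by
  simpa only [h.inv_inv] using h.inv_mul_one x⁻¹

theorem mul_inv_cancel (h : IsLeftBol Q) (x : Q) : x * x⁻¹ = 1 := by
  simpa only [h.inv_inv] using h.inv_mul x⁻¹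

theorem mul_inv_cancel_left (h : IsLeftBol Q) (x z : Q) : x * (x⁻¹ * z) = z := by
  simpa only [h.inv_inv] using h.inv_inv_mul_inv_mul x z

theorem inv_mul_cancel_left (h : IsLeftBol Q) (x z : Q) : x⁻¹ * (x * z) = z := by
  simpa only [h.inv_inv] using h.inv_mul_inv_inv_mul x z

theorem mul_left_bijective (h : IsLeftBol Q) (a : Q) : Function.Bijective (a * ·) :=
  Function.bijective_iff_has_inverse.mpr
    ⟨(a⁻¹ * ·), h.inv_mul_cancel_left a, h.mul_inv_cancel_left a⟩

theorem mul_right_bijective (h : IsLeftBol Q) (a : Q) : Function.Bijective (· * a) :=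
  Function.bijective_iff_has_inverse.mpr ⟨fun b => a⁻¹ * (a * b * a⁻¹),
    fun y => by simp only [h.bol, h.mul_inv_cancel, h.mul_one, h.inv_mul_cancel_left],
    fun b => by simp only [h.bol, h.inv_mul, h.mul_one, h.inv_mul_cancel_left]⟩

end IsLeftBol

/-- A groupoid with a left neutral element and left inverses
satisfying the left Bol identity is a loop. -/
theorem stmt_14 {Q : Type*} (mul : Q → Q → Q) (one : Q) (inv : Q → Q)
    (h_one_left : ∀ x, mul one x = x)
    (h_inv_left : ∀ x, mul (inv x) x = one)
    (h_lb : ∀ x y z, mul (mul x (mul y x)) z = mul x (mul y (mul x z))) :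
    (∀ x, mul x one = x) ∧
    (∀ x, mul x (inv x) = one) ∧
    (∀ a b : Q, (∃! x : Q, mul a x = b) ∧ (∃! y : Q, mul y a = b)) := by
  let : Mul Q := ⟨mul⟩
  let : One Q := ⟨one⟩
  let : Inv Q := ⟨inv⟩
  have h : IsLeftBol Q := ⟨h_one_left, h_inv_left, h_lb⟩
  exact ⟨h.mul_one, h.mul_inv_cancel, fun a b =>
    ⟨(h.mul_left_bijective a).existsUnique b, (h.mul_right_bijective a).existsUnique b⟩⟩
end

section
/- Let Q be a set with a binary operation ·, an element 1, and a map x ↦ x' such that 1·x = x (1 is a left neutral element) and x'·x = 1 (left inverses) for all x ∈ Q. If Q satisfies the Moufang identity ((x·y)·x)·z = x·(y·(x·z)) for all x, y, z, then Q is a loop: 1 is a two-sided neutral element, every x' is a two-sided inverse of x, and for all a, b the equations a·x = b and y·a = b have unique solutions. -/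
/-!
Write `L a` for the left translation `z ↦ a * z`; the Moufang identity says
`L ((x * y) * x) = L x ∘ L y ∘ L x`. Its specialisations make `L x` and `L x⁻¹` generalised
inverses of each other (`L x ∘ L x⁻¹ ∘ L x = L x` and symmetrically), and give
`L x⁻¹ ∘ L x⁻¹⁻¹ ∘ L x⁻¹⁻¹ ∘ L x⁻¹ = id`, so `L x⁻¹` is bijective. Hence `L x⁻¹` is the inverse
of `L x`, which yields `x * 1 = x`, `x⁻¹⁻¹ = x` and unique left division. Finally the Moufang
identity with `z = x⁻¹`, applied to `w = x * (x⁻¹ * w)`, gives `(w * x) * x⁻¹ = w`, hence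
unique right division.
-/

structure IsLeftUnitalMoufang (Q : Type*) [Mul Q] [One Q] [Inv Q] : Prop where
  one_mul : ∀ x : Q, 1 * x = x
  inv_mul_cancel : ∀ x : Q, x⁻¹ * x = 1
  moufang : ∀ x y z : Q, x * y * x * z = x * (y * (x * z))

namespace IsLeftUnitalMoufang

variable {Q : Type*} [Mul Q] [One Q] [Inv Q]

theorem mul_one_mul (hQ : IsLeftUnitalMoufang Q) (y z : Q) : y * 1 * z = y * z := by
  simpa only [hQ.one_mul] using hQ.moufang 1 y z

theorem mul_self_mul (hQ : IsLeftUnitalMoufang Q) (x z : Q) : x * x * z = x * (x * z) := by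
  simpa only [hQ.mul_one_mul, hQ.one_mul] using hQ.moufang x 1 z

theorem moufang_one (hQ : IsLeftUnitalMoufang Q) (x y z : Q) :
    x * (y * (x * 1)) * z = x * (y * (x * z)) := by
  rw [← hQ.moufang x y 1, hQ.mul_one_mul, hQ.moufang]

theorem inv_mul_mul_inv_mul (hQ : IsLeftUnitalMoufang Q) (x z : Q) :
    x⁻¹ * (x * (x⁻¹ * z)) = x⁻¹ * z := by
  rw [← hQ.moufang, hQ.inv_mul_cancel, hQ.one_mul]

theorem inv_mul_mul_one (hQ : IsLeftUnitalMoufang Q) (x : Q) : x⁻¹ * (x * 1) = 1 := by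
  simpa only [hQ.inv_mul_cancel] using hQ.inv_mul_mul_inv_mul x x

theorem mul_inv_mul_mul (hQ : IsLeftUnitalMoufang Q) (x z : Q) :
    x * (x⁻¹ * (x * z)) = x * z := by
  rw [← hQ.moufang_one, hQ.inv_mul_mul_one, hQ.mul_one_mul]

theorem mul_inv_mul_one_mul (hQ : IsLeftUnitalMoufang Q) (x z : Q) :
    x * (x⁻¹ * 1) * z = x * (x⁻¹ * (x⁻¹ * (x * z))) := by
  simpa only [hQ.mul_self_mul, hQ.inv_mul_mul_one] using hQ.moufang_one x (x⁻¹ * x⁻¹) z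

theorem bijective_inv_mul (hQ : IsLeftUnitalMoufang Q) (x : Q) :
    Function.Bijective (x⁻¹ * ·) := by
  have h_one : x⁻¹ * (x⁻¹⁻¹ * 1) = 1 := by
    simpa only [hQ.inv_mul_cancel] using hQ.mul_inv_mul_mul x⁻¹ x
  have h_id (z : Q) : x⁻¹ * (x⁻¹⁻¹ * (x⁻¹⁻¹ * (x⁻¹ * z))) = z := by
    rw [← hQ.mul_inv_mul_one_mul, h_one, hQ.one_mul]
  exact ⟨Function.LeftInverse.injective (g := fun w => x⁻¹ * (x⁻¹⁻¹ * (x⁻¹⁻¹ * w))) h_id,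
    fun z => ⟨_, h_id z⟩⟩

theorem mul_inv_cancel_left (hQ : IsLeftUnitalMoufang Q) (x z : Q) : x * (x⁻¹ * z) = z :=
  (hQ.bijective_inv_mul x).1 (hQ.inv_mul_mul_inv_mul x z)

theorem inv_mul_cancel_left (hQ : IsLeftUnitalMoufang Q) (x z : Q) : x⁻¹ * (x * z) = z := by
  obtain ⟨w, rfl⟩ := (hQ.bijective_inv_mul x).2 z
  exact hQ.inv_mul_mul_inv_mul x w

theorem mul_one (hQ : IsLeftUnitalMoufang Q) (x : Q) : x * 1 = x :=
  (hQ.bijective_inv_mul x).1 (by simp only [hQ.inv_mul_mul_one, hQ.inv_mul_cancel])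

theorem inv_inv (hQ : IsLeftUnitalMoufang Q) (x : Q) : x⁻¹⁻¹ = x := by
  simpa only [hQ.inv_mul_cancel, hQ.mul_one] using hQ.inv_mul_cancel_left x⁻¹ x

theorem mul_inv_cancel (hQ : IsLeftUnitalMoufang Q) (x : Q) : x * x⁻¹ = 1 := by
  simpa only [hQ.inv_inv] using hQ.inv_mul_cancel x⁻¹

theorem mul_inv_cancel_right (hQ : IsLeftUnitalMoufang Q) (w x : Q) : w * x * x⁻¹ = w := by
  obtain ⟨y, rfl⟩ : ∃ y, x * y = w := ⟨x⁻¹ * w, hQ.mul_inv_cancel_left x w⟩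
  rw [hQ.moufang, hQ.mul_inv_cancel, hQ.mul_one]

theorem inv_mul_cancel_right (hQ : IsLeftUnitalMoufang Q) (w x : Q) : w * x⁻¹ * x = w := by
  simpa only [hQ.inv_inv] using hQ.mul_inv_cancel_right w x⁻¹

theorem existsUnique_mul_left_eq (hQ : IsLeftUnitalMoufang Q) (a b : Q) : ∃! x, a * x = b :=
  ⟨a⁻¹ * b, hQ.mul_inv_cancel_left a b, fun x hx => hx ▸ (hQ.inv_mul_cancel_left a x).symm⟩

theorem existsUnique_mul_right_eq (hQ : IsLeftUnitalMoufang Q) (a b : Q) : ∃! y, y * a = b :=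
  ⟨b * a⁻¹, hQ.inv_mul_cancel_right b a, fun y hy => hy ▸ (hQ.mul_inv_cancel_right y a).symm⟩

end IsLeftUnitalMoufang

/-- A groupoid with a left neutral element and left inverses
satisfying the Moufang identity (M1) is a loop. -/
theorem stmt_15 {Q : Type*} (mul : Q → Q → Q) (one : Q) (inv : Q → Q)
    (h_one_left : ∀ x, mul one x = x)
    (h_inv_left : ∀ x, mul (inv x) x = one)
    (h_m1 : ∀ x y z, mul (mul (mul x y) x) z = mul x (mul y (mul x z))) :
    (∀ x, mul x one = x) ∧
    (∀ x, mul x (inv x) = one) ∧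
    (∀ a b : Q, (∃! x : Q, mul a x = b) ∧ (∃! y : Q, mul y a = b)) := by
  let _ : Mul Q := ⟨mul⟩
  let _ : One Q := ⟨one⟩
  let _ : Inv Q := ⟨inv⟩
  have hQ : IsLeftUnitalMoufang Q := ⟨h_one_left, h_inv_left, h_m1⟩
  exact ⟨hQ.mul_one, hQ.mul_inv_cancel,
    fun a b => ⟨hQ.existsUnique_mul_left_eq a b, hQ.existsUnique_mul_right_eq a b⟩⟩
end

section
/- Let Q be a set with a binary operation ·, an element 1, and a map x ↦ x' such that 1·x = x (1 is a left neutral element) and x'·x = 1 (left inverses) for all x ∈ Q. If Q satisfies the Moufang identity x·(y·(z·y)) = ((x·y)·z)·y for all x, y, z, then Q is a loop: 1 is a two-sided neutral element, every x' is a two-sided inverse of x, and for all a, b the equations a·x = b and y·a = b have unique solutions. -/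
/-! Putting `x = 1` in the Moufang identity gives flexibility `y(zy) = (yz)y`. Further
specialisations of the identity, with `y'y = 1` substituted, show successively that
`y'(y1) = 1`, `(y1)y' = 1`, `yy' = 1` and `y1 = y`. Then `z ↦ ((zy)(y'y'))` is an explicit
right division by `y`, which yields the left inverse property `y'(yw) = w`, hence `y'' = y`,
and finally the right inverse property. The four cancellation laws make `a'b` and `ba'` the
unique solutions of `ax = b` and `ya = b`. -/

structure IsMoufangLeftInv {Q : Type*} (mul : Q → Q → Q) (one : Q) (inv : Q → Q) : Prop where
  one_mul : ∀ x, mul one x = x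
  inv_mul_cancel : ∀ x, mul (inv x) x = one
  moufang : ∀ x y z, mul x (mul y (mul z y)) = mul (mul (mul x y) z) y

namespace IsMoufangLeftInv

variable {Q : Type*} {mul : Q → Q → Q} {one : Q} {inv : Q → Q}

theorem flexible (h : IsMoufangLeftInv mul one inv) (y z : Q) :
    mul y (mul z y) = mul (mul y z) y := by
  simpa only [h.one_mul] using h.moufang one y z

theorem mul_one_eq (h : IsMoufangLeftInv mul one inv) (y : Q) :
    mul y one = mul (mul y (inv y)) y := by
  simpa only [h.inv_mul_cancel] using h.flexible y (inv y)

theorem inv_mul_mul_one (h : IsMoufangLeftInv mul one inv) (y : Q) :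
    mul (inv y) (mul y one) = one := by
  simpa only [h.inv_mul_cancel, h.one_mul] using h.moufang (inv y) y (inv y)

theorem mul_one_mul_inv (h : IsMoufangLeftInv mul one inv) (y : Q) :
    mul (mul y one) (inv y) = one := by
  have key := h.moufang (inv (inv y)) (inv y) (mul y one)
  rw [h.inv_mul_cancel, h.one_mul, h.flexible, h.inv_mul_mul_one, h.one_mul,
    h.inv_mul_cancel] at key
  exact key.symm

theorem mul_inv_cancel (h : IsMoufangLeftInv mul one inv) (y : Q) :
    mul y (inv y) = one := by
  have key := h.moufang y (inv y) y
  rwa [h.flexible (inv y), h.inv_mul_cancel, h.one_mul, ← h.mul_one_eq,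
    h.mul_one_mul_inv] at key

theorem mul_one (h : IsMoufangLeftInv mul one inv) (y : Q) : mul y one = y := by
  rw [h.mul_one_eq, h.mul_inv_cancel, h.one_mul]

theorem mul_inv_mul_inv (h : IsMoufangLeftInv mul one inv) (y : Q) :
    mul y (mul (inv y) (inv y)) = inv y := by
  simpa only [h.one_mul, h.mul_inv_cancel, h.mul_one] using h.moufang y (inv y) one

theorem mul_mul_inv_mul_inv_mul (h : IsMoufangLeftInv mul one inv) (x y : Q) :
    mul (mul (mul x y) (mul (inv y) (inv y))) y = x := by
  have key := h.moufang x y (mul (inv y) (inv y))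
  rw [h.flexible y, h.mul_inv_mul_inv, h.inv_mul_cancel, h.mul_one] at key
  exact key.symm

theorem inv_mul_cancel_left (h : IsMoufangLeftInv mul one inv) (y w : Q) :
    mul (inv y) (mul y w) = w := by
  have key := h.moufang (inv y) y (mul (mul w y) (mul (inv y) (inv y)))
  rwa [h.mul_mul_inv_mul_inv_mul, h.inv_mul_cancel, h.one_mul,
    h.mul_mul_inv_mul_inv_mul] at key

theorem inv_inv (h : IsMoufangLeftInv mul one inv) (y : Q) : inv (inv y) = y := by
  simpa only [h.inv_mul_cancel, h.mul_one] using h.inv_mul_cancel_left (inv y) y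

theorem mul_inv_cancel_left (h : IsMoufangLeftInv mul one inv) (y w : Q) :
    mul y (mul (inv y) w) = w := by
  simpa only [h.inv_inv] using h.inv_mul_cancel_left (inv y) w

theorem inv_mul_cancel_right (h : IsMoufangLeftInv mul one inv) (w y : Q) :
    mul (mul w (inv y)) y = w := by
  have key := h.moufang (mul (mul w y) (mul (inv y) (inv y))) y (inv y)
  rw [h.inv_mul_cancel, h.mul_one, h.mul_mul_inv_mul_inv_mul] at key
  exact key.symm

theorem mul_inv_cancel_right (h : IsMoufangLeftInv mul one inv) (w y : Q) :
    mul (mul w y) (inv y) = w := by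
  simpa only [h.inv_inv] using h.inv_mul_cancel_right w (inv y)

theorem existsUnique_mul_left_eq (h : IsMoufangLeftInv mul one inv) (a b : Q) :
    ∃! x, mul a x = b :=
  ⟨mul (inv a) b, h.mul_inv_cancel_left a b, fun x hx => by
    rw [← hx, h.inv_mul_cancel_left]⟩

theorem existsUnique_mul_right_eq (h : IsMoufangLeftInv mul one inv) (a b : Q) :
    ∃! y, mul y a = b :=
  ⟨mul b (inv a), h.inv_mul_cancel_right b a, fun y hy => by
    rw [← hy, h.mul_inv_cancel_right]⟩

end IsMoufangLeftInv

/-- A groupoid with a left neutral element and left inverses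
satisfying the Moufang identity (M2) is a loop. -/
theorem stmt_16 {Q : Type*} (mul : Q → Q → Q) (one : Q) (inv : Q → Q)
    (h_one_left : ∀ x, mul one x = x)
    (h_inv_left : ∀ x, mul (inv x) x = one)
    (h_m2 : ∀ x y z, mul x (mul y (mul z y)) = mul (mul (mul x y) z) y) :
    (∀ x, mul x one = x) ∧
    (∀ x, mul x (inv x) = one) ∧
    (∀ a b : Q, (∃! x : Q, mul a x = b) ∧ (∃! y : Q, mul y a = b)) := by
  have h : IsMoufangLeftInv mul one inv := ⟨h_one_left, h_inv_left, h_m2⟩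
  exact ⟨h.mul_one, h.mul_inv_cancel,
    fun a b => ⟨h.existsUnique_mul_left_eq a b, h.existsUnique_mul_right_eq a b⟩⟩
end

section
/- Let Q be a set with a binary operation ·, an element 1, and a map x ↦ x' such that 1·x = x (1 is a left neutral element) and x'·x = 1 (left inverses) for all x ∈ Q. If Q satisfies the C-identity x·(y·(y·z)) = ((x·y)·y)·z for all x, y, z, then Q is a loop: 1 is a two-sided neutral element, every x' is a two-sided inverse of x, and for all a, b the equations a·x = b and y·a = b have unique solutions. -/
/-!
Putting `x = 1` and `x = y'` in the C-identity gives the left alternative law `(yy)z = y(yz)` and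
`y'(y(yz)) = yz`. Applying the C-identity twice shows that `z ↦ z(zw)` has a left inverse, so
every left multiplication is injective; with injectivity the two identities above yield
`x'' = x`, `x1 = x` and the left inverse property `x'(xz) = z`. The right inverse property
`(xy')y = x` follows by applying the left one to a suitable product, and the two inverse
properties give unique solvability of both division equations.
-/

structure IsLeftCGroupoid {Q : Type*} (mul : Q → Q → Q) (one : Q) (inv : Q → Q) : Prop where
  one_mul : ∀ x, mul one x = x
  inv_mul : ∀ x, mul (inv x) x = one
  c_identity : ∀ x y z, mul x (mul y (mul y z)) = mul (mul (mul x y) y) z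

namespace IsLeftCGroupoid

variable {Q : Type*} {mul : Q → Q → Q} {one : Q} {inv : Q → Q}

local infixl:70 " ⬝ " => mul

theorem mul_self_mul (h : IsLeftCGroupoid mul one inv) (y z : Q) :
    (y ⬝ y) ⬝ z = y ⬝ (y ⬝ z) := by
  simpa only [h.one_mul] using (h.c_identity one y z).symm

theorem inv_mul_mul_mul (h : IsLeftCGroupoid mul one inv) (y z : Q) :
    inv y ⬝ (y ⬝ (y ⬝ z)) = y ⬝ z := by
  rw [h.c_identity, h.inv_mul, h.one_mul]

theorem mul_eq_mul_of_mul_one_eq (h : IsLeftCGroupoid mul one inv) {a b : Q}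
    (hab : a ⬝ one = b ⬝ one) (z : Q) : a ⬝ z = b ⬝ z := by
  have mul_eq_mul_one_mul_one : ∀ x, x ⬝ z = ((x ⬝ one) ⬝ one) ⬝ z := fun x => by
    simpa only [h.one_mul] using h.c_identity x one z
  rw [mul_eq_mul_one_mul_one a, mul_eq_mul_one_mul_one b, hab]

theorem mul_right_injective (h : IsLeftCGroupoid mul one inv) (z : Q) :
    Function.Injective (z ⬝ ·) := by
  have cube : ∀ x w, (x ⬝ (z ⬝ (z ⬝ z))) ⬝ w = (x ⬝ z) ⬝ (z ⬝ (z ⬝ w)) := fun x w => by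
    rw [h.c_identity x z z, h.c_identity (x ⬝ z) z w]
  have left_inv : ∀ w, (inv (z ⬝ (z ⬝ z)) ⬝ z) ⬝ (z ⬝ (z ⬝ w)) = w := fun w => by
    rw [← cube, h.inv_mul, h.one_mul]
  intro a b (hab : z ⬝ a = z ⬝ b)
  rw [← left_inv a, hab, left_inv]

theorem inv_inv (h : IsLeftCGroupoid mul one inv) (x : Q) : inv (inv x) = x := by
  have inv_inv_mul : ∀ y z, inv (inv y) ⬝ (inv y ⬝ (y ⬝ z)) = y ⬝ z := fun y z => by
    conv_lhs => rw [← h.inv_mul_mul_mul y z, h.inv_mul_mul_mul (inv y)]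
    exact h.inv_mul_mul_mul y z
  have inv_inv_mul_one : inv (inv x) ⬝ (inv x ⬝ one) = one := by
    simpa only [h.inv_mul] using h.inv_mul_mul_mul (inv x) x
  have inv_inv_inv_mul_one : inv (inv (inv x)) ⬝ one = inv x ⬝ one := by
    simpa only [inv_inv_mul_one] using inv_inv_mul (inv x) one
  apply h.mul_right_injective (inv x)
  show inv x ⬝ inv (inv x) = inv x ⬝ x
  rw [← h.mul_eq_mul_of_mul_one_eq inv_inv_inv_mul_one, h.inv_mul, h.inv_mul]

theorem mul_inv (h : IsLeftCGroupoid mul one inv) (x : Q) : x ⬝ inv x = one := by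
  simpa only [h.inv_inv] using h.inv_mul (inv x)

theorem inv_mul_one (h : IsLeftCGroupoid mul one inv) (x : Q) : inv x ⬝ one = inv x := by
  apply h.mul_right_injective x
  show x ⬝ (inv x ⬝ one) = x ⬝ inv x
  simpa only [h.inv_inv, h.inv_mul, h.mul_inv] using h.inv_mul_mul_mul (inv x) x

theorem mul_one (h : IsLeftCGroupoid mul one inv) (x : Q) : x ⬝ one = x := by
  simpa only [h.inv_inv] using h.inv_mul_one (inv x)

theorem inv_mul_cancel_left (h : IsLeftCGroupoid mul one inv) (x z : Q) :
    inv x ⬝ (x ⬝ z) = z := by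
  calc inv x ⬝ (x ⬝ z) = (inv x ⬝ inv x) ⬝ (x ⬝ (x ⬝ z)) := by
        rw [h.mul_self_mul, h.inv_mul_mul_mul]
    _ = ((inv x ⬝ (inv x ⬝ x)) ⬝ x) ⬝ z := by rw [h.c_identity, h.mul_self_mul]
    _ = z := by rw [h.inv_mul, h.inv_mul_one, h.inv_mul, h.one_mul]

theorem mul_inv_cancel_left (h : IsLeftCGroupoid mul one inv) (x z : Q) :
    x ⬝ (inv x ⬝ z) = z := by
  simpa only [h.inv_inv] using h.inv_mul_cancel_left (inv x) z

theorem mul_mul_self (h : IsLeftCGroupoid mul one inv) (x y : Q) :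
    (x ⬝ y) ⬝ y = x ⬝ (y ⬝ y) := by
  simpa only [h.mul_one] using (h.c_identity x y one).symm

theorem mul_mul_self_mul (h : IsLeftCGroupoid mul one inv) (x y z : Q) :
    (x ⬝ (y ⬝ y)) ⬝ z = x ⬝ (y ⬝ (y ⬝ z)) := by
  rw [← h.mul_mul_self, h.c_identity]

theorem inv_mul_inv_mul (h : IsLeftCGroupoid mul one inv) (x z : Q) :
    inv (x ⬝ inv z) ⬝ x = z := by
  -- left inverse property for the product `u ⬝ z` with `u = x ⬝ (z' ⬝ z')`
  have := h.inv_mul_cancel_left ((x ⬝ (inv z ⬝ inv z)) ⬝ z) z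
  rw [h.mul_mul_self, h.mul_mul_self_mul, h.mul_mul_self_mul, h.inv_mul_cancel_left, h.inv_mul,
    h.mul_one, h.mul_one] at this
  exact this

theorem inv_mul_cancel_right (h : IsLeftCGroupoid mul one inv) (x z : Q) :
    (x ⬝ inv z) ⬝ z = x := by
  simpa only [h.inv_mul_inv_mul] using h.mul_inv_cancel_left (x ⬝ inv z) x

theorem mul_inv_cancel_right (h : IsLeftCGroupoid mul one inv) (x y : Q) :
    (x ⬝ y) ⬝ inv y = x := by
  simpa only [h.inv_inv] using h.inv_mul_cancel_right x (inv y)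

end IsLeftCGroupoid

/-- A groupoid with a left neutral element and left inverses
satisfying the C-identity is a loop. -/
theorem stmt_17 {Q : Type*} (mul : Q → Q → Q) (one : Q) (inv : Q → Q)
    (h_one_left : ∀ x, mul one x = x)
    (h_inv_left : ∀ x, mul (inv x) x = one)
    (h_c : ∀ x y z, mul x (mul y (mul y z)) = mul (mul (mul x y) y) z) :
    (∀ x, mul x one = x) ∧
    (∀ x, mul x (inv x) = one) ∧
    (∀ a b : Q, (∃! x : Q, mul a x = b) ∧ (∃! y : Q, mul y a = b)) := by
  have h : IsLeftCGroupoid mul one inv := ⟨h_one_left, h_inv_left, h_c⟩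
  refine ⟨h.mul_one, h.mul_inv, fun a b => ⟨⟨mul (inv a) b, ?_, ?_⟩, ⟨mul b (inv a), ?_, ?_⟩⟩⟩
  · exact h.mul_inv_cancel_left a b
  · rintro x rfl
    exact (h.inv_mul_cancel_left a x).symm
  · exact h.inv_mul_cancel_right b a
  · rintro y rfl
    exact (h.mul_inv_cancel_right y a).symm
end

section
/- Let Q be a set with a binary operation ·, an element 1, and a map x ↦ x' such that 1·x = x·1 = x (1 is a two-sided neutral element) and x·x' = 1 (right inverses) for all x ∈ Q. If Q satisfies the left Bol identity (x·(y·x))·z = x·(y·(x·z)) for all x, y, z, then Q is a loop: every x' is a two-sided inverse of x (x'·x = 1 as well), and for all a, b the equations a·x = b and y·a = b have unique solutions. -/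
/-!
Specialising the left Bol identity at `z = x'` gives `(x(yx))x' = xy`; taking `x := x'`,
`y := x` there shows `x'x = 1`, and taking `y = 1` gives `(xx)x' = x`. Feeding the latter
back into the Bol identity with `x := x'`, `y := xx` yields `x'((xx)(x'z)) = z`, from which
`x'' = x` and then the left inverse property `x(x'z) = z = x'(xz)` follow. So left
multiplication by `a` is inverted by left multiplication by `a'`, and right multiplication
by `a` is inverted by `b ↦ a'((ab)a')`.
-/

def IsLeftBol_s19 {Q : Type*} (mul : Q → Q → Q) : Prop :=
  ∀ x y z, mul (mul x (mul y x)) z = mul x (mul y (mul x z))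

namespace IsLeftBol_s19

variable {Q : Type*} {mul : Q → Q → Q} {one : Q} {inv : Q → Q}

theorem mul_mul_mul_inv (h : IsLeftBol_s19 mul) (mul_one : ∀ x, mul x one = x)
    (mul_inv_cancel : ∀ x, mul x (inv x) = one) (x y : Q) :
    mul (mul x (mul y x)) (inv x) = mul x y := by
  rw [h, mul_inv_cancel, mul_one]

theorem inv_mul_cancel (h : IsLeftBol_s19 mul) (mul_one : ∀ x, mul x one = x)
    (mul_inv_cancel : ∀ x, mul x (inv x) = one) (x : Q) : mul (inv x) x = one := by
  have key := h.mul_mul_mul_inv mul_one mul_inv_cancel (inv x) x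
  rw [mul_inv_cancel, mul_one, mul_inv_cancel] at key
  exact key.symm

theorem mul_self_mul_inv (h : IsLeftBol_s19 mul) (one_mul : ∀ x, mul one x = x)
    (mul_one : ∀ x, mul x one = x) (mul_inv_cancel : ∀ x, mul x (inv x) = one) (x : Q) :
    mul (mul x x) (inv x) = x := by
  simpa only [one_mul, mul_one] using h.mul_mul_mul_inv mul_one mul_inv_cancel x one

theorem inv_mul_mul_self_mul_inv_mul (h : IsLeftBol_s19 mul) (one_mul : ∀ x, mul one x = x)
    (mul_one : ∀ x, mul x one = x) (mul_inv_cancel : ∀ x, mul x (inv x) = one) (x z : Q) :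
    mul (inv x) (mul (mul x x) (mul (inv x) z)) = z := by
  rw [← h, h.mul_self_mul_inv one_mul mul_one mul_inv_cancel,
    h.inv_mul_cancel mul_one mul_inv_cancel, one_mul]

theorem inv_inv_s19 (h : IsLeftBol_s19 mul) (one_mul : ∀ x, mul one x = x)
    (mul_one : ∀ x, mul x one = x) (mul_inv_cancel : ∀ x, mul x (inv x) = one) (x : Q) :
    inv (inv x) = x := by
  have hx := h.inv_mul_mul_self_mul_inv_mul one_mul mul_one mul_inv_cancel x x
  have hx'' := h.inv_mul_mul_self_mul_inv_mul one_mul mul_one mul_inv_cancel x (inv (inv x))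
  rw [h.inv_mul_cancel mul_one mul_inv_cancel, mul_one] at hx
  rw [mul_inv_cancel, mul_one] at hx''
  exact hx''.symm.trans hx

theorem mul_inv_cancel_left_s19 (h : IsLeftBol_s19 mul) (one_mul : ∀ x, mul one x = x)
    (mul_one : ∀ x, mul x one = x) (mul_inv_cancel : ∀ x, mul x (inv x) = one) (x z : Q) :
    mul x (mul (inv x) z) = z := by
  have hz := h.inv_mul_mul_self_mul_inv_mul one_mul mul_one mul_inv_cancel (inv x) z
  rw [h.inv_inv_s19 one_mul mul_one mul_inv_cancel] at hz
  -- with `w = (x'x')(xz)` we have `xw = z`, and the Bol identity at `y = x'` reads `xw = x(x'(xw))`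
  have hbol := h x (inv x) (mul (mul (inv x) (inv x)) (mul x z))
  rwa [h.inv_mul_cancel mul_one mul_inv_cancel, mul_one, hz, eq_comm] at hbol

theorem inv_mul_cancel_left_s19 (h : IsLeftBol_s19 mul) (one_mul : ∀ x, mul one x = x)
    (mul_one : ∀ x, mul x one = x) (mul_inv_cancel : ∀ x, mul x (inv x) = one) (x z : Q) :
    mul (inv x) (mul x z) = z := by
  simpa only [h.inv_inv_s19 one_mul mul_one mul_inv_cancel]
    using h.mul_inv_cancel_left_s19 one_mul mul_one mul_inv_cancel (inv x) z

theorem bijective_mul_left (h : IsLeftBol_s19 mul) (one_mul : ∀ x, mul one x = x)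
    (mul_one : ∀ x, mul x one = x) (mul_inv_cancel : ∀ x, mul x (inv x) = one) (a : Q) :
    Function.Bijective (mul a) :=
  Function.bijective_iff_has_inverse.mpr ⟨mul (inv a),
    h.inv_mul_cancel_left_s19 one_mul mul_one mul_inv_cancel a,
    h.mul_inv_cancel_left_s19 one_mul mul_one mul_inv_cancel a⟩

theorem bijective_mul_right (h : IsLeftBol_s19 mul) (one_mul : ∀ x, mul one x = x)
    (mul_one : ∀ x, mul x one = x) (mul_inv_cancel : ∀ x, mul x (inv x) = one) (a : Q) :
    Function.Bijective (fun y => mul y a) := by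
  refine Function.bijective_iff_has_inverse.mpr
    ⟨fun b => mul (inv a) (mul (mul a b) (inv a)), fun y => ?_, fun b => ?_⟩
  · simp only [h.mul_mul_mul_inv mul_one mul_inv_cancel,
      h.inv_mul_cancel_left_s19 one_mul mul_one mul_inv_cancel]
  · have hb := h.mul_mul_mul_inv mul_one mul_inv_cancel (inv a) (mul a b)
    rwa [h.inv_inv_s19 one_mul mul_one mul_inv_cancel,
      h.inv_mul_cancel_left_s19 one_mul mul_one mul_inv_cancel] at hb

end IsLeftBol_s19

/-- A groupoid with a two-sided neutral element and right
inverses satisfying the left Bol identity is a loop, and the right inverses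
are two-sided. -/
theorem stmt_19 {Q : Type*} (mul : Q → Q → Q) (one : Q) (inv : Q → Q)
    (h_one_left : ∀ x, mul one x = x) (h_one_right : ∀ x, mul x one = x)
    (h_inv_right : ∀ x, mul x (inv x) = one)
    (h_lb : ∀ x y z, mul (mul x (mul y x)) z = mul x (mul y (mul x z))) :
    (∀ x, mul (inv x) x = one) ∧
    (∀ a b : Q, (∃! x : Q, mul a x = b) ∧ (∃! y : Q, mul y a = b)) := by
  have hBol : IsLeftBol_s19 mul := h_lb
  exact ⟨hBol.inv_mul_cancel h_one_right h_inv_right, fun a b =>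
    ⟨(hBol.bijective_mul_left h_one_left h_one_right h_inv_right a).existsUnique b,
      (hBol.bijective_mul_right h_one_left h_one_right h_inv_right a).existsUnique b⟩⟩
end
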